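/- For any natural numbers N ≥ 1 and d ≥ 1, there are infinitely many primes not belonging to S_{d,N} = ⋃_{i=1}^d Σ_{i,N}. -/

import Mathlib

/-- `IsSmooth N m` : `m ∈ Π_N`, the `N`-smooth positive integers. -/
def IsSmooth (N m : ℕ) : Prop := 0 < m ∧ ∀ p : ℕ, p.Prime → p ∣ m → p ≤ N

/-- `SigmaSet i N` = `Σ_{i,N}`, sums of exactly `i` elements of `Π_N`. -/
def SigmaSet (i N : ℕ) : Set ℕ :=
  {m | ∃ f : Fin i → ℕ, (∀ k, IsSmooth N (f k)) ∧ ∑ k, f k = m}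

/-- `SdN d N` = `S_{d,N} = ⋃_{i=1}^d Σ_{i,N}`. -/
def SdN (d N : ℕ) : Set ℕ := ⋃ i ∈ Finset.Icc 1 d, SigmaSet i N

/-
If `m = f₁ + ⋯ + fᵢ` with every `fⱼ` `N`-smooth, then `fⱼ ≤ m` gives `1 / m ≤ ∏ⱼ fⱼ ^ (-1/i)`.
Choosing one such representation for each `m ∈ Σ_{i,N}` injects `Σ_{i,N}` into `i`-tuples of
smooth numbers, so `∑_{m ∈ Σ_{i,N}} 1/m ≤ (∑_{f ∈ Π_N} f ^ (-1/i))ⁱ`, which is finite by the Euler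
product over the finitely many primes `≤ N`. Hence `∑_{m ∈ S_{d,N}} 1/m < ∞`, and since
`∑_p 1/p = ∞`, the primes outside `S_{d,N}` cannot form a finite set.
-/

open Set Function

section IndicatorSummable

variable {α : Type*} {f : α → ℝ}

lemma summable_indicator_union (hf : 0 ≤ f) {s t : Set α} (hs : Summable (s.indicator f))
    (ht : Summable (t.indicator f)) : Summable ((s ∪ t).indicator f) := by
  refine (hs.add ht).of_nonneg_of_le (fun a ↦ indicator_nonneg (fun b _ ↦ hf b) a) fun a ↦ ?_
  rw [← indicator_union_add_inter_apply]
  exact le_add_of_nonneg_right (indicator_nonneg (fun b _ ↦ hf b) a)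

lemma summable_indicator_of_subset (hf : 0 ≤ f) {s t : Set α} (hst : s ⊆ t)
    (ht : Summable (t.indicator f)) : Summable (s.indicator f) :=
  ht.of_nonneg_of_le (fun a ↦ indicator_nonneg (fun b _ ↦ hf b) a)
    (indicator_le_indicator_of_subset hst hf)

lemma summable_indicator_biUnion (hf : 0 ≤ f) {ι : Type*} (I : Finset ι) {s : ι → Set α}
    (hs : ∀ i ∈ I, Summable ((s i).indicator f)) : Summable ((⋃ i ∈ I, s i).indicator f) := by
  classical
  induction I using Finset.induction_on with
  | empty => simp [summable_zero]
  | insert i I _ ih =>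
    rw [Finset.set_biUnion_insert]
    exact summable_indicator_union hf (hs i (Finset.mem_insert_self i I))
      (ih fun j hj ↦ hs j (Finset.mem_insert_of_mem hj))

end IndicatorSummable

lemma summable_pi_prod_of_nonneg {σ : Type*} {g : σ → ℝ} (hg : Summable g) (hg0 : 0 ≤ g)
    (k : ℕ) : Summable fun a : Fin k → σ ↦ ∏ j, g (a j) := by
  induction k with
  | zero => exact Summable.of_finite
  | succ k ih =>
    have hmul : Summable fun p : σ × (Fin k → σ) ↦ g p.1 * ∏ j, g (p.2 j) :=
      hg.mul_of_nonneg (g := fun a : Fin k → σ ↦ ∏ j, g (a j)) ih hg0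
        fun a ↦ Finset.prod_nonneg fun j _ ↦ hg0 _
    refine (Fin.consEquiv fun _ : Fin (k + 1) ↦ σ).summable_iff.mp <| hmul.congr fun p ↦ ?_
    simp only [comp_apply, Fin.consEquiv_apply, Fin.prod_univ_succ, Fin.cons_zero, Fin.cons_succ]

lemma one_div_sum_le_prod_rpow {ι : Type*} [Fintype ι] {x : ι → ℝ} (hx : ∀ j, 0 < x j) :
    1 / ∑ j, x j ≤ ∏ j, x j ^ (-(1 / Fintype.card ι : ℝ)) := by
  rcases isEmpty_or_nonempty ι with hι | hι
  · simp
  set n := Fintype.card ι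
  set S := ∑ j, x j
  have hS : 0 < S := Finset.sum_pos (fun j _ ↦ hx j) Finset.univ_nonempty
  have hn : (n : ℝ) ≠ 0 := by simp [n, Fintype.card_ne_zero]
  have hprod : ∏ j, x j ≤ S ^ n :=
    calc ∏ j, x j ≤ ∏ _j : ι, S :=
          Finset.prod_le_prod (fun j _ ↦ (hx j).le) fun j _ ↦
            Finset.single_le_sum (fun k _ ↦ (hx k).le) (Finset.mem_univ j)
      _ = S ^ n := by rw [Finset.prod_const, Finset.card_univ]
  calc 1 / S = (S ^ n) ^ (-(1 / n : ℝ)) := by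
        rw [← Real.rpow_natCast, ← Real.rpow_mul hS.le, mul_neg, mul_one_div_cancel hn,
          Real.rpow_neg_one, one_div]
    _ ≤ (∏ j, x j) ^ (-(1 / n : ℝ)) :=
        Real.rpow_le_rpow_of_nonpos (Finset.prod_pos fun j _ ↦ hx j) hprod
          (by simp [n])
    _ = ∏ j, x j ^ (-(1 / n : ℝ)) :=
        (Real.finsetProd_rpow _ _ (fun j _ ↦ (hx j).le) _).symm

lemma summable_rpow_smoothNumbers (n : ℕ) {r : ℝ} (hr : r < 0) :
    Summable fun m : n.smoothNumbers ↦ (m : ℝ) ^ r := by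
  let f : ℕ →* ℝ :=
    { toFun n := (n : ℝ) ^ r
      map_one' := by simp
      map_mul' a b := by push_cast; exact Real.mul_rpow a.cast_nonneg b.cast_nonneg }
  refine (EulerProduct.summable_and_hasSum_smoothNumbers_prod_primesBelow_geometric
    (f := f) (fun {p} hp ↦ ?_) n).1.of_norm
  change ‖(p : ℝ) ^ r‖ < 1
  rw [Real.norm_of_nonneg (Real.rpow_nonneg p.cast_nonneg r)]
  exact Real.rpow_lt_one_of_one_lt_of_neg (mod_cast hp.one_lt) hr

lemma IsSmooth.mem_smoothNumbers {N m : ℕ} (h : IsSmooth N m) : m ∈ (N + 1).smoothNumbers :=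
  Nat.mem_smoothNumbers'.mpr fun p hp hpm ↦ Nat.lt_succ_of_le (h.2 p hp hpm)

lemma summable_one_div_on_sigmaSet {i : ℕ} (hi : 0 < i) (N : ℕ) :
    Summable ((SigmaSet i N).indicator fun n : ℕ ↦ (1 : ℝ) / n) := by
  rw [← summable_subtype_iff_indicator]
  choose f hf hsum using fun m : SigmaSet i N ↦ m.2
  let s (m : SigmaSet i N) (j : Fin i) : (N + 1).smoothNumbers :=
    ⟨f m j, (hf m j).mem_smoothNumbers⟩
  have hs : Injective s := fun m₁ m₂ h ↦ Subtype.ext <| by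
    rw [← hsum m₁, ← hsum m₂]
    exact Finset.sum_congr rfl fun j _ ↦ congrArg Subtype.val (congrFun h j)
  have hr : -(1 / i : ℝ) < 0 := by simpa using hi
  have htuples := (summable_pi_prod_of_nonneg (summable_rpow_smoothNumbers (N + 1) hr)
    (fun m ↦ Real.rpow_nonneg m.1.cast_nonneg _) i).comp_injective hs
  refine htuples.of_nonneg_of_le (fun m ↦ by simp) fun m ↦ ?_
  calc (1 : ℝ) / (m : ℕ) = 1 / ∑ j, (f m j : ℝ) := by rw [← hsum m]; push_cast; rfl
    _ ≤ ∏ j, (f m j : ℝ) ^ (-(1 / i : ℝ)) := by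
      simpa using one_div_sum_le_prod_rpow fun j ↦ (Nat.cast_pos.mpr (hf m j).1 : (0 : ℝ) < _)

lemma summable_one_div_on_sdN (d N : ℕ) :
    Summable ((SdN d N).indicator fun n : ℕ ↦ (1 : ℝ) / n) :=
  summable_indicator_biUnion (fun n ↦ by positivity) _ fun i hi ↦
    summable_one_div_on_sigmaSet (Finset.mem_Icc.mp hi).1 N

theorem infinite_primes_not_in_SdN_general (N d : ℕ) :
    {p : ℕ | p.Prime ∧ p ∉ SdN d N}.Infinite := by
  intro hfin
  have hnonneg : 0 ≤ fun n : ℕ ↦ (1 : ℝ) / n := fun n ↦ by positivity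
  have hprimes : {p : ℕ | p.Prime} ⊆ SdN d N ∪ {p | p.Prime ∧ p ∉ SdN d N} := fun p hp ↦
    (em (p ∈ SdN d N)).imp id fun h ↦ ⟨hp, h⟩
  refine not_summable_one_div_on_primes <| summable_indicator_of_subset hnonneg hprimes <|
    summable_indicator_union hnonneg (summable_one_div_on_sdN d N) ?_
  exact summable_of_hasFiniteSupport (hfin.subset support_indicator_subset)

theorem infinite_primes_not_in_SdN (N d : ℕ) (hN : 1 ≤ N) (hd : 1 ≤ d) :
    {p : ℕ | p.Prime ∧ p ∉ SdN d N}.Infinite :=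
  infinite_primes_not_in_SdN_general N d
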